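/- For r ∈ √2ℚ write r = x/y, where either (x,y) = (√2·p, q) with p, q coprime integers and q odd, or (x,y) = (p, √2·q) with p, q coprime integers and p odd (so that H_{√2ℚ}(r) = y²). Then for any two distinct r = x/y and r' = x'/y' in √2ℚ, the Ford circles based at r and r' — the closed disks in ℝ² centered at (r, 1/(2y²)) and (r', 1/(2y'²)) of radii 1/(2y²) and 1/(2y'²) — are tangent or disjoint; explicitly, (1/(2y²) − 1/(2y'²))² + (r − r')² ≥ (1/(2y²) + 1/(2y'²))², with equality if and only if |x·y' − x'·y| = 1. -/
import Mathlib


/-- `x/y` is an admissible fraction representation of an element of `√2ℚ`: either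
`(x, y) = (√2·p, q)` with `p, q` coprime integers and `q` odd, or `(x, y) = (p, √2·q)`
with `p, q` coprime integers, `q ≠ 0` and `p` odd.  In both cases the height of `x/y`
is `y²`. -/
def IsSqrt2QFraction (x y : ℝ) : Prop :=
  (∃ p q : ℤ, IsCoprime p q ∧ Odd q ∧ x = Real.sqrt 2 * (p : ℝ) ∧ y = (q : ℝ)) ∨
  (∃ p q : ℤ, IsCoprime p q ∧ Odd p ∧ q ≠ 0 ∧ x = (p : ℝ) ∧ y = Real.sqrt 2 * (q : ℝ))

theorem aux_int_sq (m : ℤ) (hm0 : m ≠ 0) : (1:ℝ) ≤ (m:ℝ)^2 := by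
  have h1 : 1 ≤ |m| := Int.one_le_abs hm0
  have h2 : 1 ≤ m^2 := by nlinarith [sq_abs m]
  exact_mod_cast h2

/-- Ford circles for `√2ℚ`: if `r = x/y ≠ r' = x'/y'` are elements of `√2ℚ` written in
the canonical form, then the Ford circles based at `r, r'` of radii `1/(2y²)`, `1/(2y'²)`
are tangent or disjoint:
`(1/(2y²) − 1/(2y'²))² + (r − r')² ≥ (1/(2y²) + 1/(2y'²))²`,
with equality if and only if `|x·y' − x'·y| = 1`. -/
theorem ford_circles_sqrt2Q (x y x' y' : ℝ)
    (hxy : IsSqrt2QFraction x y) (hxy' : IsSqrt2QFraction x' y')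
    (r r' : ℝ) (hr : r = x / y) (hr' : r' = x' / y') (hne : r ≠ r') :
    (1 / (2 * y ^ 2) + 1 / (2 * y' ^ 2)) ^ 2
      ≤ (1 / (2 * y ^ 2) - 1 / (2 * y' ^ 2)) ^ 2 + (r - r') ^ 2 ∧
    ((1 / (2 * y ^ 2) - 1 / (2 * y' ^ 2)) ^ 2 + (r - r') ^ 2
        = (1 / (2 * y ^ 2) + 1 / (2 * y' ^ 2)) ^ 2
      ↔ |x * y' - x' * y| = 1) := by
  have hs2 : Real.sqrt 2 ^ 2 = 2 := Real.sq_sqrt (by norm_num)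
  have hs2ne : Real.sqrt 2 ≠ 0 := by positivity
  -- denominators are nonzero
  have hy : y ≠ 0 := by
    rcases hxy with ⟨p, q, _, hq, _, hyq⟩ | ⟨p, q, _, _, hq, _, hyq⟩
    · rw [hyq]; have : q ≠ 0 := by rcases hq with ⟨k, hk⟩; omega
      exact_mod_cast this
    · rw [hyq]; exact mul_ne_zero hs2ne (by exact_mod_cast hq)
  have hy' : y' ≠ 0 := by
    rcases hxy' with ⟨p, q, _, hq, _, hyq⟩ | ⟨p, q, _, _, hq, _, hyq⟩
    · rw [hyq]; have : q ≠ 0 := by rcases hq with ⟨k, hk⟩; omega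
      exact_mod_cast this
    · rw [hyq]; exact mul_ne_zero hs2ne (by exact_mod_cast hq)
  set D : ℝ := x * y' - x' * y with hDdef
  have hD0 : D ≠ 0 := by
    intro h
    apply hne
    rw [hr, hr', div_eq_div_iff hy hy']
    have : x * y' = x' * y := by linarith [sub_eq_zero.mp h]
    exact this
  -- key algebraic identity
  have hpos : (0:ℝ) < y ^ 2 * y' ^ 2 := by positivity
  have hE : (1 / (2 * y ^ 2) - 1 / (2 * y' ^ 2)) ^ 2 + (r - r') ^ 2
      - (1 / (2 * y ^ 2) + 1 / (2 * y' ^ 2)) ^ 2 = (D ^ 2 - 1) / (y ^ 2 * y' ^ 2) := by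
    rw [hr, hr', hDdef]
    field_simp
    ring
  -- show 1 ≤ D ^ 2 in all cases
  have hD1 : 1 ≤ D ^ 2 := by
    rcases hxy with ⟨p, q, _, hq, hx1, hy1⟩ | ⟨p, q, _, hp, hq, hx1, hy1⟩ <;>
      rcases hxy' with ⟨p', q', _, hq', hx2, hy2⟩ | ⟨p', q', _, hp', hq'', hx2, hy2⟩
    · -- both of first form : D = √2 * (p q' - p' q)
      have hDv : D = Real.sqrt 2 * ((p * q' - p' * q : ℤ) : ℝ) := by
        rw [hDdef, hx1, hy1, hx2, hy2]; push_cast; ring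
      have hm : (p * q' - p' * q : ℤ) ≠ 0 := by
        intro h
        apply hD0
        rw [hDv, h]; simp
      have := aux_int_sq _ hm
      rw [hDv, mul_pow, hs2]
      nlinarith
    · -- mixed: D = 2 p q' - p' q, odd
      have hDv : D = ((2 * p * q' - p' * q : ℤ) : ℝ) := by
        rw [hDdef, hx1, hy1, hx2, hy2]
        push_cast
        linear_combination ((p:ℝ) * q') * hs2
      have hm : (2 * p * q' - p' * q : ℤ) ≠ 0 := by
        have hodd : Odd (2 * p * q' - p' * q) := by
          rcases hq with ⟨a, ha⟩; rcases hp' with ⟨b, hb⟩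
          exact ⟨p * q' - 2 * a * b - a - b - 1, by rw [ha, hb]; ring⟩
        intro h; rw [h] at hodd; exact (Int.not_odd_iff_even.mpr Even.zero) hodd
      rw [hDv]; exact aux_int_sq _ hm
    · -- mixed other way: D = p q' - 2 p' q, odd
      have hDv : D = ((p * q' - 2 * p' * q : ℤ) : ℝ) := by
        rw [hDdef, hx1, hy1, hx2, hy2]
        push_cast
        linear_combination (-((p':ℝ) * q)) * hs2
      have hm : (p * q' - 2 * p' * q : ℤ) ≠ 0 := by
        have hodd : Odd (p * q' - 2 * p' * q) := by
          rcases hp with ⟨a, ha⟩; rcases hq' with ⟨b, hb⟩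
          exact ⟨2 * a * b + a + b - p' * q, by rw [ha, hb]; ring⟩
        intro h; rw [h] at hodd; exact (Int.not_odd_iff_even.mpr Even.zero) hodd
      rw [hDv]; exact aux_int_sq _ hm
    · -- both of second form
      have hDv : D = Real.sqrt 2 * ((p * q' - p' * q : ℤ) : ℝ) := by
        rw [hDdef, hx1, hy1, hx2, hy2]; push_cast; ring
      have hm : (p * q' - p' * q : ℤ) ≠ 0 := by
        intro h
        apply hD0
        rw [hDv, h]; simp
      have := aux_int_sq _ hm
      rw [hDv, mul_pow, hs2]
      nlinarith
  constructor
  · nlinarith [div_nonneg (by linarith : (0:ℝ) ≤ D ^ 2 - 1) hpos.le]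
  · constructor
    · intro h
      have h0 : (D ^ 2 - 1) / (y ^ 2 * y' ^ 2) = 0 := by linarith
      have : D ^ 2 - 1 = 0 := by
        rcases div_eq_zero_iff.mp h0 with h0 | h0
        · exact h0
        · exact absurd h0 hpos.ne'
      have hD2 : D ^ 2 = 1 := by linarith
      have : |D| = 1 := by
        rw [← sq_abs] at hD2
        nlinarith [abs_nonneg D]
      exact this
    · intro h
      have hD2 : D ^ 2 = 1 := by rw [← sq_abs, h]; norm_num
      have : (D ^ 2 - 1) / (y ^ 2 * y' ^ 2) = 0 := by rw [hD2]; simp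
      linarith
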